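/- Let (S_1,…,S_k) be an increasing ordered partition of [n] and σ a permutation of [n], and let β be the unique permutation of [n] with 1_{(S_1,…,S_k)} ∘ 1_σ = 1_β. Then: (i) β(S_i) = S_i for each i; (ii) β^{-1}∘σ is a shuffle of (S_1,…,S_k); (iii) the factorization σ = β ∘ (β^{-1}∘σ) is unique, i.e. if σ = β'∘τ with β'(S_i) = S_i for all i and τ a shuffle of (S_1,…,S_k), then β' = β and τ = β^{-1}∘σ. -/

import Mathlib

/-!
Twisted descent algebras and the Solomon-Tits algebra (Patras-Schocker).

* A *packed sequence* is a finite sequence of pairwise disjoint nonempty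
  finite subsets of ℕ.
* `TD k` is the free twisted descent algebra `𝒯`: the free `k`-module with
  basis `1_w`, `w` a packed sequence.
* `convL` is the convolution product `∗`, `compL` the composition product `∘`,
  `deltaL` the coproduct `δ`.
* `TD k` also realizes the free twisted bialgebra `ℬ` (whose basis words
  `α_{S_1}⋯α_{S_k}` are exactly the packed sequences); `Tmap u` realizes the
  convolution `1_{U_1} ∗ ⋯ ∗ 1_{U_l}` of characteristic maps as an
  endomorphism of `ℬ`; `BS k S` is the graded piece `ℬ_S` with concatenation
  `mulInto` and deconcatenation `deltaInto`.
-/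

open scoped TensorProduct

noncomputable section
namespace TwistedDescent

/-- A sequence of finite subsets of `ℕ`. -/
abbrev PSeq : Type := List (Finset ℕ)

/-- A packed sequence: a finite sequence of pairwise disjoint nonempty finite
subsets of `ℕ`. -/
def Packed (w : PSeq) : Prop :=
  w.Pairwise (fun S T => Disjoint S T) ∧ ∀ S ∈ w, S ≠ ∅

instance : DecidablePred Packed := fun w => by unfold Packed; infer_instance

/-- The type of packed sequences. -/
abbrev PackedSeq : Type := {w : PSeq // Packed w}

/-- The free twisted descent algebra `𝒯`: the free `k`-module with basis the
packed sequences.  (The same module realizes the free twisted bialgebra `ℬ`,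
whose basis words are the packed sequences.) -/
abbrev TD (k : Type) [CommRing k] : Type := PackedSeq →₀ k

variable (k : Type) [CommRing k]

/-- The basis element `1_l` of `𝒯` if `l` is packed, and `0` otherwise. -/
def mk (l : PSeq) : TD k := if h : Packed l then Finsupp.single ⟨l, h⟩ 1 else 0

/-- The union `S_1 ∪ ⋯ ∪ S_k` of the members of a sequence of sets. -/
def unionOf (w : PSeq) : Finset ℕ := w.foldr (· ∪ ·) ∅

/-- The convolution product `∗` on `𝒯`, as a bilinear map:
`1_{(S_1,…,S_n)} ∗ 1_{(T_1,…,T_m)} = 1_{(S_1,…,S_n,T_1,…,T_m)}` if all the sets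
are pairwise disjoint, and `0` otherwise. -/
def convL : TD k →ₗ[k] TD k →ₗ[k] TD k :=
  Finsupp.lsum k fun w => LinearMap.toSpanSingleton k _ <|
    Finsupp.lsum k fun v => LinearMap.toSpanSingleton k _ (mk k (w.1 ++ v.1))

/-- The refinement `(S_1∩T_1,…,S_1∩T_k,…,S_n∩T_1,…,S_n∩T_k)` of two sequences,
with all empty intersections deleted. -/
def refines (w v : PSeq) : PSeq :=
  w.flatMap fun S => (v.map fun U => S ∩ U).filter fun U => U ≠ ∅

/-- The composition product on basis elements: `0` if the underlying sets
differ, and the refinement otherwise. -/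
def compB (w v : PSeq) : TD k :=
  if unionOf w = unionOf v then mk k (refines w v) else 0

/-- The composition product `∘` on `𝒯`, as a bilinear map. -/
def compL : TD k →ₗ[k] TD k →ₗ[k] TD k :=
  Finsupp.lsum k fun w => LinearMap.toSpanSingleton k _ <|
    Finsupp.lsum k fun v => LinearMap.toSpanSingleton k _ (compB k w.1 v.1)

instance : Zero (TD k ⊗[k] TD k) :=
  (inferInstance : AddZeroClass (TD k ⊗[k] TD k)).toZero

/-- All ways of splitting each block `S_i` of `w` into an ordered pair
`(T_i, U_i)` with `S_i = T_i ⊔ U_i`. -/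
def splittings (w : PSeq) : List (List (Finset ℕ × Finset ℕ)) :=
  (w.map fun S => S.powerset.toList.map fun U => (U, S \ U)).sections

/-- Delete all empty sets from a sequence. -/
def strip (l : PSeq) : PSeq := l.filter fun S => S ≠ ∅

/-- The coproduct on a basis element:
`δ(1_{(S_1,…,S_k)}) = Σ 1_{(T_1,…,T_k)^} ⊗ 1_{(U_1,…,U_k)^}` summed over all
ways of writing `S_i = T_i ⊔ U_i`, where `^` deletes empty sets. -/
def deltaB (w : PackedSeq) : TD k ⊗[k] TD k :=
  ((splittings w.1).map fun p =>
    (mk k (strip (p.map Prod.fst)) ⊗ₜ[k] mk k (strip (p.map Prod.snd)) :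
      TD k ⊗[k] TD k)).sum

/-- The coproduct `δ : 𝒯 → 𝒯 ⊗ 𝒯`. -/
def deltaL : TD k →ₗ[k] TD k ⊗[k] TD k :=
  Finsupp.lsum k fun w => LinearMap.toSpanSingleton k _ (deltaB k w)

/-- The componentwise convolution `∗₂` on `𝒯 ⊗ 𝒯`:
`(a⊗b) ∗₂ (c⊗d) = (a∗c)⊗(b∗d)`. -/
def conv2 : TD k ⊗[k] TD k →ₗ[k] TD k ⊗[k] TD k →ₗ[k] TD k ⊗[k] TD k :=
  (TensorProduct.homTensorHomMap (RingHom.id k) _ _ _ _).comp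
    (TensorProduct.map (convL k) (convL k))

/-- The componentwise composition `∘₂` on `𝒯 ⊗ 𝒯`:
`(a⊗b) ∘₂ (c⊗d) = (a∘c)⊗(b∘d)`. -/
def comp2 : TD k ⊗[k] TD k →ₗ[k] TD k ⊗[k] TD k →ₗ[k] TD k ⊗[k] TD k :=
  (TensorProduct.homTensorHomMap (RingHom.id k) _ _ _ _).comp
    (TensorProduct.map (compL k) (compL k))

/-- The linear map `μ : 𝒯 ⊗ 𝒯 → 𝒯` induced by the convolution product. -/
def muL : TD k ⊗[k] TD k →ₗ[k] TD k := TensorProduct.lift (convL k)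

/-- The submodule `𝒯_S` of `𝒯` spanned by the basis elements `1_w` with `w` an
ordered partition of `S`. -/
def TS (S : Finset ℕ) : Submodule k (TD k) :=
  Submodule.span k {x | ∃ w : PackedSeq, unionOf w.1 = S ∧ x = Finsupp.single w 1}

/-- The blocks of `w` contained in `U_1`, in their original relative order,
then those contained in `U_2`, and so on. -/
def reorder (u w : PSeq) : PSeq := u.flatMap fun U => w.filter fun S => S ⊆ U

/-- Action of `T_u = 1_{U_1} ∗ ⋯ ∗ 1_{U_l}` on a basis word of `ℬ`: the word is
killed unless it has degree `∪ U_j` and each of its blocks is contained in some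
`U_j`, in which case the blocks are regrouped along `u`. -/
def TmapB (u : PSeq) (w : PackedSeq) : TD k :=
  if unionOf w.1 = unionOf u ∧ ∀ S ∈ w.1, ∃ U ∈ u, S ⊆ U then mk k (reorder u w.1)
  else 0

/-- The endomorphism `T_u = 1_{U_1} ∗ ⋯ ∗ 1_{U_l}` of the free twisted
bialgebra `ℬ`. -/
def Tmap (u : PSeq) : Module.End k (TD k) :=
  Finsupp.lsum k fun w => LinearMap.toSpanSingleton k _ (TmapB k u w)

/-- Ordered partitions of the finite set `S`. -/
def OrdPart (S : Finset ℕ) : Type := {w : PSeq // Packed w ∧ unionOf w = S}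

/-- The graded component `ℬ_S`: the free `k`-module on the ordered partitions
of `S`. -/
abbrev BS (S : Finset ℕ) : Type := OrdPart S →₀ k

/-- Basis element of `ℬ_S`, or `0` if `l` is not an ordered partition of `S`. -/
def mkS (S : Finset ℕ) (l : PSeq) : BS k S :=
  if h : Packed l ∧ unionOf l = S then Finsupp.single ⟨l, h⟩ 1 else 0

instance (S S' : Finset ℕ) : Zero (BS k S ⊗[k] BS k S') :=
  (inferInstance : AddZeroClass (BS k S ⊗[k] BS k S')).toZero

/-- Concatenation `m_{U,V} : ℬ_U ⊗ ℬ_V → ℬ_S` (nonzero only when `U ⊔ V = S`),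
as a bilinear map. -/
def mulInto (U V S : Finset ℕ) : BS k U →ₗ[k] BS k V →ₗ[k] BS k S :=
  Finsupp.lsum k fun w => LinearMap.toSpanSingleton k _ <|
    Finsupp.lsum k fun v => LinearMap.toSpanSingleton k _ (mkS k S (w.1 ++ v.1))

/-- Deconcatenation `δ_{U,V} : ℬ_S → ℬ_U ⊗ ℬ_V` (intended for `S = U ⊔ V`):
a basis word goes to `w_U ⊗ w_V` if each of its blocks is contained in `U` or
in `V`, where `w_U` (resp. `w_V`) is the subsequence of blocks contained in `U`
(resp. `V`), and to `0` otherwise. -/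
def deltaInto (S U V : Finset ℕ) : BS k S →ₗ[k] BS k U ⊗[k] BS k V :=
  Finsupp.lsum k fun w => LinearMap.toSpanSingleton k _ <|
    if ∀ B ∈ w.1, B ⊆ U ∨ B ⊆ V then
      mkS k U (w.1.filter fun B => B ⊆ U) ⊗ₜ[k] mkS k V (w.1.filter fun B => B ⊆ V)
    else 0

/-- Graded endomorphisms of `ℬ`: families `(f_S)_S` of endomorphisms of the
graded components `ℬ_S`. -/
abbrev GEnd : Type := (S : Finset ℕ) → Module.End k (BS k S)

/-- The convolution of graded endomorphisms:
`(f∗g)_S = Σ_{U ⊔ V = S} m_{U,V} ∘ (f_U ⊗ g_V) ∘ δ_{U,V}`. -/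
def gconv (f g : GEnd k) : GEnd k := fun S =>
  ∑ U ∈ S.powerset,
    (TensorProduct.lift (mulInto k U (S \ U) S)).comp
      ((TensorProduct.map (f U) (g (S \ U))).comp (deltaInto k S U (S \ U)))

/-- The characteristic map `1_∅`: the identity on `ℬ_∅` and `0` on `ℬ_S` for
`S ≠ ∅`. -/
def gone : GEnd k := fun S => if S = ∅ then LinearMap.id else 0

/-- `1_C(S)`: the sum of all `1_w`, `w` an ordered partition of `S` of
type `C`. -/
def oneC (C : List ℕ) (S : Finset ℕ) : TD k :=
  ∑ᶠ w : PackedSeq,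
    if unionOf w.1 = S ∧ w.1.map Finset.card = C then Finsupp.single w (1 : k) else 0

/-- The composition obtained by reading a matrix of nonnegative integers row by
row and deleting all zero entries. -/
def matComp {r c : ℕ} (a : Fin r → Fin c → ℕ) : List ℕ :=
  (List.finRange r).flatMap fun i =>
    ((List.finRange c).map fun j => a i j).filter fun m => m ≠ 0

/-- `σ` is a permutation of `[n] = {1,…,n}`: it fixes everything outside
`{1,…,n}` (and hence permutes `{1,…,n}`). -/
def IsPermOn (n : ℕ) (σ : Equiv.Perm ℕ) : Prop := ∀ m ∉ Finset.Icc 1 n, σ m = m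

/-- The sequence `({σ(1)},…,{σ(n)})` of singletons, written `1_σ` in `𝒯`. -/
def permList (n : ℕ) (σ : Equiv.Perm ℕ) : PSeq :=
  (List.range n).map fun i => {σ (i + 1)}

/-- An ordered partition `(S_1,…,S_k)` is increasing if `s < s'` whenever
`s ∈ S_i`, `s' ∈ S_j` and `i < j`. -/
def Increasing (w : PSeq) : Prop := w.Pairwise fun S T => ∀ s ∈ S, ∀ t ∈ T, s < t

/-- `σ` is a shuffle of `(S_1,…,S_k)`: the elements of each `S_i` occur in
increasing order in the sequence `(σ(1),…,σ(n))`. -/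
def IsShuffle (n : ℕ) (w : PSeq) (σ : Equiv.Perm ℕ) : Prop :=
  ∀ S ∈ w, ∀ i j : ℕ, 1 ≤ i → i < j → j ≤ n → σ i ∈ S → σ j ∈ S → σ i < σ j

/-- The descent set `D(τ) = {i | 1 ≤ i ≤ n-1, τ(i) > τ(i+1)}` of a permutation
of `[n]`. -/
def Des (n : ℕ) (τ : Equiv.Perm ℕ) : Set ℕ := {i | 1 ≤ i ∧ i < n ∧ τ (i + 1) < τ i}

/-- The right action of a permutation `σ`:
`1_{(S_1,…,S_k)}·σ = 1_{(σ⁻¹(S_1),…,σ⁻¹(S_k))}`, extended linearly. -/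
def actL (σ : Equiv.Perm ℕ) : TD k →ₗ[k] TD k :=
  Finsupp.lsum k fun w =>
    LinearMap.toSpanSingleton k _ (mk k (w.1.map fun S => S.image ⇑σ⁻¹))


section Aux
variable {k : Type} [CommRing k] [Nontrivial k]

lemma isPermOn_maps {n : ℕ} {σ : Equiv.Perm ℕ} (h : IsPermOn n σ)
    {m : ℕ} (hm : m ∈ Finset.Icc 1 n) : σ m ∈ Finset.Icc 1 n := by
  by_contra hc
  have h2 := h (σ m) hc
  have : σ m = m := σ.injective h2
  exact hc (by rw [this]; exact hm)

lemma IsPermOn.inv {n : ℕ} {σ : Equiv.Perm ℕ} (h : IsPermOn n σ) : IsPermOn n σ⁻¹ := by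
  intro m hm
  have := h m hm
  calc σ⁻¹ m = σ⁻¹ (σ m) := by rw [this]
  _ = m := σ.symm_apply_apply m

lemma IsPermOn.mul {n : ℕ} {σ τ : Equiv.Perm ℕ} (h : IsPermOn n σ) (h' : IsPermOn n τ) :
    IsPermOn n (σ * τ) := by
  intro m hm
  simp [Equiv.Perm.mul_apply, h' m hm, h m hm]

lemma mem_unionOf {w : PSeq} {x : ℕ} : x ∈ unionOf w ↔ ∃ S ∈ w, x ∈ S := by
  induction w with
  | nil => simp [unionOf]
  | cons S t ih => simp [unionOf, List.foldr_cons, Finset.mem_union, ih.symm]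

end Aux

section Aux2
variable {k : Type} [CommRing k] [Nontrivial k]

lemma permList_packed {n : ℕ} (σ : Equiv.Perm ℕ) : Packed (permList n σ) := by
  constructor
  · rw [permList, List.pairwise_map]
    have : (List.range n).Pairwise (· < ·) := List.pairwise_lt_range
    exact this.imp (fun {i j} hij => by
      simp only [Finset.disjoint_singleton]
      exact fun h => absurd (σ.injective h) (by omega))
  · intro S hS
    rw [permList, List.mem_map] at hS
    obtain ⟨i, _, rfl⟩ := hS
    simp

lemma unionOf_permList {n : ℕ} {σ : Equiv.Perm ℕ} (h : IsPermOn n σ) :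
    unionOf (permList n σ) = Finset.Icc 1 n := by
  ext x
  rw [mem_unionOf]
  simp only [permList, List.mem_map, List.mem_range]
  constructor
  · rintro ⟨S, ⟨i, hi, rfl⟩, hx⟩
    rw [Finset.mem_singleton] at hx
    subst hx
    exact isPermOn_maps h (by simp; omega)
  · intro hx
    have h1 : σ⁻¹ x ∈ Finset.Icc 1 n := isPermOn_maps h.inv hx
    rw [Finset.mem_Icc] at h1
    refine ⟨{σ (σ⁻¹ x - 1 + 1)}, ⟨σ⁻¹ x - 1, by omega, rfl⟩, ?_⟩
    have : σ⁻¹ x - 1 + 1 = σ⁻¹ x := by omega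
    rw [this]
    simp

lemma mk_ne_zero {l : PSeq} (hl : Packed l) : (mk k l : TD k) ≠ 0 := by
  rw [mk, dif_pos hl]
  exact fun h => one_ne_zero ((Finsupp.single_eq_zero (a := (⟨l, hl⟩ : PackedSeq)) (b := (1:k))).mp h)

lemma mk_inj {l l' : PSeq} (hl' : Packed l') (h : mk k l = mk k l') : l = l' := by
  simp only [mk] at h
  rw [dif_pos hl'] at h
  split_ifs at h with hp
  · have := (Finsupp.single_eq_single_iff _ _ _ _).mp h
    rcases this with ⟨h1, _⟩ | ⟨h0, _⟩
    · exact congrArg Subtype.val h1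
    · exact absurd h0 one_ne_zero
  · exact absurd h.symm (fun hh => one_ne_zero ((Finsupp.single_eq_zero (a := (⟨l', hl'⟩ : PackedSeq)) (b := (1:k))).mp hh))

lemma hcomp_extract {n : ℕ} {w : PackedSeq} (σ β : Equiv.Perm ℕ)
    (hcomp : compL k (Finsupp.single w 1) (mk k (permList n σ))
      = mk k (permList n β)) :
    refines w.1 (permList n σ) = permList n β := by
  rw [mk, dif_pos (permList_packed σ)] at hcomp
  rw [compL] at hcomp
  simp only [Finsupp.lsum_single, LinearMap.toSpanSingleton_apply, one_smul] at hcomp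
  rw [compB] at hcomp
  split_ifs at hcomp with hu
  · exact mk_inj (permList_packed β) hcomp
  · exact absurd hcomp.symm (mk_ne_zero (permList_packed β))

end Aux2

section Aux3
variable {k : Type} [CommRing k] [Nontrivial k]

/-- The list `(σ 1, …, σ n)`. -/
def plist (n : ℕ) (σ : Equiv.Perm ℕ) : List ℕ := (List.range n).map fun i => σ (i + 1)

lemma permList_eq (n : ℕ) (σ : Equiv.Perm ℕ) :
    permList n σ = (plist n σ).map fun x => ({x} : Finset ℕ) := by
  rw [permList, plist, List.map_map]
  rfl

lemma refines_singleton (S : Finset ℕ) (l : List ℕ) :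
    (((l.map fun x => ({x} : Finset ℕ)).map fun U => S ∩ U).filter fun U => U ≠ ∅)
      = (l.filter fun x => x ∈ S).map fun x => ({x} : Finset ℕ) := by
  induction l with
  | nil => rfl
  | cons x t ih =>
    by_cases hx : x ∈ S
    · simp only [List.map_cons, List.filter_cons, Finset.inter_singleton_of_mem hx,
        decide_eq_true_eq, hx, if_pos, ih]
      simp
    · simp only [List.map_cons, List.filter_cons, Finset.inter_singleton_of_notMem hx,
        decide_eq_true_eq, hx, ih]
      simp

lemma key_list_eq {n : ℕ} {w : PackedSeq} {σ β : Equiv.Perm ℕ}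
    (h : refines w.1 (permList n σ) = permList n β) :
    w.1.flatMap (fun S => (plist n σ).filter fun x => x ∈ S) = plist n β := by
  rw [refines, permList_eq n σ, permList_eq n β] at h
  have h2 : w.1.flatMap (fun S => ((plist n σ).filter fun x => x ∈ S).map
      fun x => ({x} : Finset ℕ)) = (plist n β).map fun x => ({x} : Finset ℕ) := by
    rw [← h]
    congr 1
    funext S
    exact (refines_singleton S (plist n σ)).symm
  rw [← List.map_flatMap] at h2
  exact List.map_injective_iff.mpr (fun a b hab => Finset.singleton_injective hab) h2

end Aux3

section Aux4

lemma plist_nodup (n : ℕ) (σ : Equiv.Perm ℕ) : (plist n σ).Nodup := by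
  refine List.nodup_range.map ?_
  intro i j hij
  have := σ.injective hij
  omega

lemma mem_plist {n : ℕ} {σ : Equiv.Perm ℕ} (h : IsPermOn n σ) {x : ℕ}
    (hx : x ∈ Finset.Icc 1 n) : x ∈ plist n σ := by
  have h1 : σ⁻¹ x ∈ Finset.Icc 1 n := isPermOn_maps h.inv hx
  rw [Finset.mem_Icc] at h1
  rw [plist, List.mem_map]
  refine ⟨σ⁻¹ x - 1, by rw [List.mem_range]; omega, ?_⟩
  have : σ⁻¹ x - 1 + 1 = σ⁻¹ x := by omega
  rw [this]
  simp

lemma filter_length {S : Finset ℕ} {l : List ℕ} (hnd : l.Nodup)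
    (hsub : ∀ x ∈ S, x ∈ l) :
    (l.filter fun x => x ∈ S).length = S.card := by
  have h1 : (l.filter fun x => x ∈ S).toFinset = S := by
    ext x
    simp only [List.mem_toFinset, List.mem_filter, decide_eq_true_eq]
    exact ⟨fun ⟨_, h⟩ => h, fun h => ⟨hsub x h, h⟩⟩
  have h2 := List.toFinset_card_of_nodup (hnd.filter (fun x => decide (x ∈ S)))
  rw [h1] at h2
  omega

lemma head_interval {S : Finset ℕ} {p q : ℕ} (hsub : S ⊆ Finset.Ioc p q)
    (hne : S ≠ ∅)
    (hdc : ∀ x ∈ S, ∀ y, p < y → y ≤ x → y ∈ S) :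
    S = Finset.Ioc p (p + S.card) := by
  have hSne : S.Nonempty := Finset.nonempty_iff_ne_empty.mpr hne
  set M := S.max' hSne with hM
  have hIoc : S = Finset.Ioc p M := by
    ext x
    rw [Finset.mem_Ioc]
    constructor
    · intro hx
      exact ⟨(Finset.mem_Ioc.mp (hsub hx)).1, S.le_max' x hx⟩
    · rintro ⟨h1, h2⟩
      exact hdc M (S.max'_mem hSne) x h1 h2
  have hpM : p < M := (Finset.mem_Ioc.mp (hsub (S.max'_mem hSne))).1
  have hcard : S.card = M - p := by rw [hIoc]; exact Nat.card_Ioc p M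
  rw [hcard, hIoc]
  congr 1
  omega

end Aux4

section Aux5

lemma main_ind {n : ℕ} {σ β : Equiv.Perm ℕ} (hσ : IsPermOn n σ) :
    ∀ (l : PSeq) (p q : ℕ), q ≤ n →
      Increasing l → (∀ S ∈ l, S ≠ ∅) →
      unionOf l = Finset.Ioc p q →
      l.flatMap (fun S => (plist n σ).filter fun x => x ∈ S)
        = (List.range (q - p)).map (fun j => β (p + j + 1)) →
      ∀ S ∈ l, ∃ p' : ℕ,
        (∀ x, x ∈ S ↔ p' < x ∧ x ≤ p' + S.card) ∧
        (∀ u (hu : u < ((plist n σ).filter fun x => x ∈ S).length),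
          β (p' + u + 1) = ((plist n σ).filter fun x => x ∈ S)[u]) := by
  intro l
  induction l with
  | nil => intro p q _ _ _ _ _ S hS; simp at hS
  | cons S t ih =>
    intro p q hq hinc hne hun hflat
    have hun' : S ∪ unionOf t = Finset.Ioc p q := by rw [← hun]; rfl
    have hsubS : S ⊆ Finset.Ioc p q := by
      intro x hx; rw [← hun']; exact Finset.mem_union_left _ hx
    have hpc := List.pairwise_cons.mp hinc
    have hincS : ∀ T ∈ t, ∀ s ∈ S, ∀ y ∈ T, s < y := fun T hT => hpc.1 T hT
    have hSne : S ≠ ∅ := hne S (by simp)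
    have hdc : ∀ x ∈ S, ∀ y, p < y → y ≤ x → y ∈ S := by
      intro x hx y hy hyx
      have hy2 : y ∈ S ∪ unionOf t := by
        rw [hun', Finset.mem_Ioc]
        exact ⟨hy, le_trans hyx (Finset.mem_Ioc.mp (hsubS hx)).2⟩
      rcases Finset.mem_union.mp hy2 with h | h
      · exact h
      · obtain ⟨T, hT, hyT⟩ := mem_unionOf.mp h
        have := hincS T hT x hx y hyT
        omega
    have hSI : S = Finset.Ioc p (p + S.card) := head_interval hsubS hSne hdc
    set c := S.card with hc
    have hcpos : 0 < c :=
      Finset.card_pos.mpr (Finset.nonempty_iff_ne_empty.mpr hSne)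
    have hpcS : p + c ∈ S := by rw [hSI, Finset.mem_Ioc]; omega
    have hpcq : p + c ≤ q := (Finset.mem_Ioc.mp (hsubS hpcS)).2
    have hlen : ((plist n σ).filter fun x => x ∈ S).length = c :=
      filter_length (plist_nodup n σ) (fun x hx => mem_plist hσ (by
        have := Finset.mem_Ioc.mp (hsubS hx); rw [Finset.mem_Icc]; omega))
    have hsplit : (List.range (q - p)).map (fun j => β (p + j + 1))
        = (List.range c).map (fun j => β (p + j + 1))
          ++ (List.range (q - (p + c))).map (fun j => β (p + c + j + 1)) := by
      have hr : q - p = c + (q - (p + c)) := by omega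
      rw [hr, List.range_add, List.map_append, List.map_map]
      congr 1
      apply List.map_congr_left
      intro j _
      simp only [Function.comp]
      congr 1
      omega
    rw [List.flatMap_cons, hsplit] at hflat
    obtain ⟨hhead, htail⟩ := List.append_inj hflat (by rw [hlen]; simp)
    have hunt : unionOf t = Finset.Ioc (p + c) q := by
      ext x
      rw [Finset.mem_Ioc]
      constructor
      · intro hx
        have h1 : x ∈ Finset.Ioc p q := by
          rw [← hun']; exact Finset.mem_union_right _ hx
        obtain ⟨T, hT, hxT⟩ := mem_unionOf.mp hx
        have := hincS T hT (p + c) hpcS x hxT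
        rw [Finset.mem_Ioc] at h1
        exact ⟨this, h1.2⟩
      · rintro ⟨h1, h2⟩
        have hx : x ∈ S ∪ unionOf t := by rw [hun', Finset.mem_Ioc]; omega
        rcases Finset.mem_union.mp hx with h | h
        · rw [hSI, Finset.mem_Ioc] at h; omega
        · exact h
    intro T hT
    rcases List.mem_cons.mp hT with rfl | hTt
    · refine ⟨p, ?_, ?_⟩
      · intro x
        rw [Finset.ext_iff] at hSI
        rw [hSI x, Finset.mem_Ioc]
      · intro u hu
        have heq := List.getElem_of_eq hhead hu
        rw [heq, List.getElem_map, List.getElem_range]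
    · exact ih (p + c) q hq hpc.2 (fun T' hT' => hne T' (List.mem_cons_of_mem _ hT'))
        hunt htail T hTt

end Aux5

section Aux6

lemma nodup_pairwise_indexOf {l : List ℕ} (h : l.Nodup) :
    l.Pairwise (fun a b => l.idxOf a < l.idxOf b) := by
  rw [List.pairwise_iff_getElem]
  intro i j hi hj hij
  rw [h.idxOf_getElem i hi, h.idxOf_getElem j hj]
  exact hij

lemma plist_getElem {n : ℕ} (σ : Equiv.Perm ℕ) {i : ℕ} (h : i < n) :
    (plist n σ)[i]'(by simp [plist]; omega) = σ (i + 1) := by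
  simp [plist]

lemma plist_indexOf {n : ℕ} (σ : Equiv.Perm ℕ) {i : ℕ} (h1 : 1 ≤ i) (h2 : i ≤ n) :
    (plist n σ).idxOf (σ i) = i - 1 := by
  have hl : i - 1 < (plist n σ).length := by simp [plist]; omega
  have : (plist n σ)[i-1]'hl = σ i := by
    rw [plist_getElem σ (by omega : i - 1 < n)]
    congr 1
    omega
  rw [← this]
  exact (plist_nodup n σ).idxOf_getElem _ hl

lemma stab_inv {S : Finset ℕ} {β' : Equiv.Perm ℕ} (h : ∀ x ∈ S, β' x ∈ S) :
    ∀ x ∈ S, β'⁻¹ x ∈ S := by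
  have himg : S.image β' = S := by
    apply Finset.eq_of_subset_of_card_le
    · intro y hy
      obtain ⟨x, hx, rfl⟩ := Finset.mem_image.mp hy
      exact h x hx
    · rw [Finset.card_image_of_injective _ β'.injective]
  intro x hx
  rw [← himg] at hx
  obtain ⟨y, hy, he⟩ := Finset.mem_image.mp hx
  rw [← he]
  simpa using hy

lemma mono_bij_unique (A : Finset ℕ) : ∀ (B : Finset ℕ) (f g : ℕ → ℕ),
    (∀ a ∈ A, f a ∈ B) → (∀ a ∈ A, ∀ a' ∈ A, a < a' → f a < f a') →
    (∀ b ∈ B, ∃ a ∈ A, f a = b) →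
    (∀ a ∈ A, g a ∈ B) → (∀ a ∈ A, ∀ a' ∈ A, a < a' → g a < g a') →
    (∀ b ∈ B, ∃ a ∈ A, g a = b) →
    ∀ a ∈ A, f a = g a := by
  induction A using Finset.strongInduction with
  | _ A ih =>
    intro B f g hfB hfm hfs hgB hgm hgs a ha
    have hAne : A.Nonempty := ⟨a, ha⟩
    have ha0 := A.min'_mem hAne
    have hBne : B.Nonempty := ⟨f (A.min' hAne), hfB _ ha0⟩
    have hmin : ∀ (h : ℕ → ℕ), (∀ a ∈ A, h a ∈ B) →
        (∀ a ∈ A, ∀ a' ∈ A, a < a' → h a < h a') →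
        (∀ b ∈ B, ∃ a ∈ A, h a = b) → h (A.min' hAne) = B.min' hBne := by
      intro h hB hm hs
      apply le_antisymm
      · obtain ⟨a1, ha1, he⟩ := hs _ (B.min'_mem hBne)
        rcases eq_or_lt_of_le (A.min'_le a1 ha1) with heq | hlt
        · rw [← he, ← heq]
        · exact le_of_lt (he ▸ hm _ ha0 _ ha1 hlt)
      · exact B.min'_le _ (hB _ ha0)
    have hfmin := hmin f hfB hfm hfs
    have hgmin := hmin g hgB hgm hgs
    rcases eq_or_lt_of_le (A.min'_le a ha) with h | h
    · rw [← h, hfmin, hgmin]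
    · have hane : a ≠ A.min' hAne := by omega
      refine ih (A.erase (A.min' hAne)) (Finset.erase_ssubset ha0)
        (B.erase (B.min' hBne)) f g ?_ ?_ ?_ ?_ ?_ ?_ a
        (Finset.mem_erase.mpr ⟨hane, ha⟩)
      · intro x hx
        obtain ⟨hxne, hxA⟩ := Finset.mem_erase.mp hx
        have hlt : A.min' hAne < x := lt_of_le_of_ne (A.min'_le x hxA) (Ne.symm hxne)
        refine Finset.mem_erase.mpr ⟨?_, hfB x hxA⟩
        rw [← hfmin]
        exact (hfm _ ha0 _ hxA hlt).ne'
      · intro x hx x' hx' hlt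
        exact hfm x (Finset.mem_erase.mp hx).2 x' (Finset.mem_erase.mp hx').2 hlt
      · intro b hb
        obtain ⟨hbne, hbB⟩ := Finset.mem_erase.mp hb
        obtain ⟨x, hxA, he⟩ := hfs b hbB
        refine ⟨x, Finset.mem_erase.mpr ⟨?_, hxA⟩, he⟩
        intro hxe
        rw [hxe, hfmin] at he
        exact hbne he.symm
      · intro x hx
        obtain ⟨hxne, hxA⟩ := Finset.mem_erase.mp hx
        have hlt : A.min' hAne < x := lt_of_le_of_ne (A.min'_le x hxA) (Ne.symm hxne)
        refine Finset.mem_erase.mpr ⟨?_, hgB x hxA⟩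
        rw [← hgmin]
        exact (hgm _ ha0 _ hxA hlt).ne'
      · intro x hx x' hx' hlt
        exact hgm x (Finset.mem_erase.mp hx).2 x' (Finset.mem_erase.mp hx').2 hlt
      · intro b hb
        obtain ⟨hbne, hbB⟩ := Finset.mem_erase.mp hb
        obtain ⟨x, hxA, he⟩ := hgs b hbB
        refine ⟨x, Finset.mem_erase.mpr ⟨?_, hxA⟩, he⟩
        intro hxe
        rw [hxe, hgmin] at he
        exact hbne he.symm

end Aux6

/-- Let `(S_1,…,S_k)` be an increasing ordered partition of
`[n]`, `σ` a permutation of `[n]`, and `β` the (unique) permutation of `[n]`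
with `1_{(S_1,…,S_k)} ∘ 1_σ = 1_β`. Then (i) `β(S_i) = S_i` for each `i`;
(ii) `β⁻¹∘σ` is a shuffle of `(S_1,…,S_k)`; (iii) this factorization
`σ = β ∘ (β⁻¹∘σ)` into an element of the Young subgroup stabilizing the `S_i`
and a shuffle is unique. -/
theorem young_shuffle_factorization (k : Type) [CommRing k] [Nontrivial k]
    (n : ℕ) (w : PackedSeq)
    (hw : unionOf w.1 = Finset.Icc 1 n) (hinc : Increasing w.1)
    (σ β : Equiv.Perm ℕ) (hσ : IsPermOn n σ) (hβ : IsPermOn n β)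
    (hcomp : compL k (Finsupp.single w 1) (mk k (permList n σ))
      = mk k (permList n β)) :
    (∀ S ∈ w.1, ∀ x ∈ S, β x ∈ S) ∧
    IsShuffle n w.1 (β⁻¹ * σ) ∧
    (∀ β' τ : Equiv.Perm ℕ, IsPermOn n β' → IsPermOn n τ →
      (∀ S ∈ w.1, ∀ x ∈ S, β' x ∈ S) → IsShuffle n w.1 τ → σ = β' * τ →
      β' = β ∧ τ = β⁻¹ * σ) := by
  have hIoc : Finset.Icc 1 n = Finset.Ioc 0 n := by
    ext x; rw [Finset.mem_Icc, Finset.mem_Ioc]; omega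
  have hL := key_list_eq (hcomp_extract σ β hcomp)
  have hL' : w.1.flatMap (fun S => (plist n σ).filter fun x => x ∈ S)
      = (List.range (n - 0)).map (fun j => β (0 + j + 1)) := by
    rw [hL, plist]
    simp
  have key := main_ind hσ w.1 0 n (le_refl n) hinc w.2.2 (by rw [hw, hIoc]) hL'
  have hsub : ∀ S ∈ w.1, ∀ y ∈ S, y ∈ Finset.Icc 1 n := by
    intro S hS y hy; rw [← hw]; exact mem_unionOf.mpr ⟨S, hS, hy⟩
  have hlen : ∀ S ∈ w.1, ((plist n σ).filter fun x => x ∈ S).length = S.card :=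
    fun S hS => filter_length (plist_nodup n σ)
      (fun y hy => mem_plist hσ (hsub S hS y hy))
  have part1 : ∀ S ∈ w.1, ∀ x ∈ S, β x ∈ S := by
    intro S hS x hx
    obtain ⟨p', hmem, hget⟩ := key S hS
    have hx' := (hmem x).mp hx
    have hu : x - p' - 1 < ((plist n σ).filter fun x => x ∈ S).length := by
      rw [hlen S hS]; omega
    have hg := hget (x - p' - 1) hu
    have hx2 : p' + (x - p' - 1) + 1 = x := by omega
    rw [hx2] at hg
    rw [hg]
    have hmem2 := List.mem_filter.mp (List.getElem_mem hu)
    simpa using hmem2.2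
  have part2 : IsShuffle n w.1 (β⁻¹ * σ) := by
    intro S hS i j hi hij hj hiS hjS
    obtain ⟨p', hmem, hget⟩ := key S hS
    simp only [Equiv.Perm.mul_apply] at hiS hjS ⊢
    have ha' := (hmem _).mp hiS
    have hb' := (hmem _).mp hjS
    have hus : β⁻¹ (σ i) - p' - 1 < ((plist n σ).filter fun x => x ∈ S).length := by
      rw [hlen S hS]; omega
    have hut : β⁻¹ (σ j) - p' - 1 < ((plist n σ).filter fun x => x ∈ S).length := by
      rw [hlen S hS]; omega
    have hga : ((plist n σ).filter fun x => x ∈ S)[β⁻¹ (σ i) - p' - 1] = σ i := by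
      rw [← hget _ hus]
      rw [show p' + (β⁻¹ (σ i) - p' - 1) + 1 = β⁻¹ (σ i) by omega]
      exact β.apply_symm_apply (σ i)
    have hgb : ((plist n σ).filter fun x => x ∈ S)[β⁻¹ (σ j) - p' - 1] = σ j := by
      rw [← hget _ hut]
      rw [show p' + (β⁻¹ (σ j) - p' - 1) + 1 = β⁻¹ (σ j) by omega]
      exact β.apply_symm_apply (σ j)
    by_contra hab
    push_neg at hab
    rcases eq_or_lt_of_le hab with heq | hlt
    · have : σ j = σ i := by
        have := congrArg β heq
        rwa [Equiv.Perm.coe_inv, Equiv.apply_symm_apply, Equiv.apply_symm_apply] at this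
      have := σ.injective this
      omega
    · have hpwf : ((plist n σ).filter fun x => x ∈ S).Pairwise
          (fun a b => (plist n σ).idxOf a < (plist n σ).idxOf b) :=
        (nodup_pairwise_indexOf (plist_nodup n σ)).sublist List.filter_sublist
      have hcmp := List.pairwise_iff_getElem.mp hpwf
        (β⁻¹ (σ j) - p' - 1) (β⁻¹ (σ i) - p' - 1) hut hus (by omega)
      rw [hga, hgb] at hcmp
      rw [plist_indexOf σ (by omega) (by omega),
        plist_indexOf σ (by omega) (le_of_lt (lt_of_lt_of_le hij hj))] at hcmp
      omega
  refine ⟨part1, part2, ?_⟩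
  intro β' τ hβ' hτ hstab hshuf hfact
  have hτβ' : ∀ m, β' (τ m) = σ m := by intro m; rw [hfact]; rfl
  have hτeq : τ = β⁻¹ * σ := by
    ext m
    by_cases hm : m ∈ Finset.Icc 1 n
    · have hσm : σ m ∈ Finset.Icc 1 n := isPermOn_maps hσ hm
      obtain ⟨S, hS, hσmS⟩ := mem_unionOf.mp (show σ m ∈ unionOf w.1 by rw [hw]; exact hσm)
      have hτmaps : ∀ j ∈ (Finset.Icc 1 n).filter (fun j => σ j ∈ S), τ j ∈ S := by
        intro j hj
        obtain ⟨hj1, hj2⟩ := Finset.mem_filter.mp hj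
        have : τ j = β'⁻¹ (σ j) := by rw [← hτβ' j, Equiv.Perm.coe_inv, Equiv.symm_apply_apply]
        rw [this]
        exact stab_inv (hstab S hS) _ hj2
      have hβmaps : ∀ j ∈ (Finset.Icc 1 n).filter (fun j => σ j ∈ S),
          (β⁻¹ * σ) j ∈ S := by
        intro j hj
        obtain ⟨hj1, hj2⟩ := Finset.mem_filter.mp hj
        exact stab_inv (part1 S hS) _ hj2
      refine mono_bij_unique ((Finset.Icc 1 n).filter (fun j => σ j ∈ S)) S
        (fun j => τ j) (fun j => (β⁻¹ * σ) j) hτmaps ?_ ?_ hβmaps ?_ ?_ m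
        (Finset.mem_filter.mpr ⟨hm, hσmS⟩)
      · intro a ha a' ha' hlt
        obtain ⟨ha1, _⟩ := Finset.mem_filter.mp ha
        obtain ⟨ha1', _⟩ := Finset.mem_filter.mp ha'
        rw [Finset.mem_Icc] at ha1 ha1'
        exact hshuf S hS a a' ha1.1 hlt ha1'.2 (hτmaps a ha) (hτmaps a' ha')
      · intro b hb
        refine ⟨τ⁻¹ b, ?_, by simp⟩
        refine Finset.mem_filter.mpr ⟨isPermOn_maps hτ.inv (hsub S hS b hb), ?_⟩
        rw [← hτβ' (τ⁻¹ b), Equiv.Perm.coe_inv, Equiv.apply_symm_apply]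
        exact hstab S hS b hb
      · intro a ha a' ha' hlt
        obtain ⟨ha1, _⟩ := Finset.mem_filter.mp ha
        obtain ⟨ha1', _⟩ := Finset.mem_filter.mp ha'
        rw [Finset.mem_Icc] at ha1 ha1'
        exact part2 S hS a a' ha1.1 hlt ha1'.2 (hβmaps a ha) (hβmaps a' ha')
      · intro b hb
        refine ⟨σ⁻¹ (β b), ?_, by simp⟩
        refine Finset.mem_filter.mpr ⟨isPermOn_maps hσ.inv
          (isPermOn_maps hβ (hsub S hS b hb)), ?_⟩
        rw [Equiv.Perm.coe_inv, Equiv.apply_symm_apply]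
        exact part1 S hS b hb
    · rw [hτ m hm]
      have := (hβ.inv.mul hσ) m hm
      rw [this]
  refine ⟨?_, hτeq⟩
  have : β' = σ * τ⁻¹ := by rw [hfact]; group
  rw [this, hτeq]
  group

end TwistedDescent
end
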